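/- For any poset P, the lattice Co(P) satisfies the Bond identity (B): x ∧ (a₀ ∨ a₁) ∧ (b₀ ∨ b₁) equals the join of the elements x ∧ aᵢ ∧ (b₀ ∨ b₁) and x ∧ bᵢ ∧ (a₀ ∨ a₁) for i < 2, together with the elements x ∧ (a₀ ∨ a₁) ∧ (b₀ ∨ b₁) ∧ (a₀ ∨ bᵢ) ∧ (a₁ ∨ b_{1−i}) for i < 2. -/
import Mathlib


/-- The join in the lattice `Co(P)` of order-convex subsets of `P`. -/
def cJoin {P : Type*} [PartialOrder P] (X Y : Set P) : Set P :=
  X ∪ Y ∪ {z | ∃ x ∈ X, ∃ y ∈ Y, (x < z ∧ z < y) ∨ (y < z ∧ z < x)}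

section aux
variable {P : Type*} [PartialOrder P] {X Y C : Set P}

lemma subset_cJoin_left : X ⊆ cJoin X Y := fun _ hz => Or.inl (Or.inl hz)

lemma subset_cJoin_right : Y ⊆ cJoin X Y := fun _ hz => Or.inl (Or.inr hz)

lemma cJoin_subset (hC : C.OrdConnected) (h1 : X ⊆ C) (h2 : Y ⊆ C) : cJoin X Y ⊆ C := by
  rintro z ((hz | hz) | ⟨x, hx, y, hy, (⟨h, h'⟩ | ⟨h, h'⟩)⟩)
  · exact h1 hz
  · exact h2 hz
  · exact hC.out (h1 hx) (h2 hy) ⟨h.le, h'.le⟩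
  · exact hC.out (h2 hy) (h1 hx) ⟨h.le, h'.le⟩

lemma mem_cJoin_of_bounds (hX : X.OrdConnected) (hY : Y.OrdConnected) {a b z : P}
    (ha : a ∈ X ∪ Y) (hb : b ∈ X ∪ Y) (h1 : a ≤ z) (h2 : z ≤ b) : z ∈ cJoin X Y := by
  rcases ha with ha | ha <;> rcases hb with hb | hb
  · exact Or.inl (Or.inl (hX.out ha hb ⟨h1, h2⟩))
  · rcases h1.lt_or_eq with h1 | rfl
    · rcases h2.lt_or_eq with h2 | rfl
      · exact Or.inr ⟨a, ha, b, hb, Or.inl ⟨h1, h2⟩⟩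
      · exact Or.inl (Or.inr hb)
    · exact Or.inl (Or.inl ha)
  · rcases h1.lt_or_eq with h1 | rfl
    · rcases h2.lt_or_eq with h2 | rfl
      · exact Or.inr ⟨b, hb, a, ha, Or.inr ⟨h1, h2⟩⟩
      · exact Or.inl (Or.inl hb)
    · exact Or.inl (Or.inr ha)
  · exact Or.inl (Or.inr (hY.out ha hb ⟨h1, h2⟩))

lemma cJoin_ordConnected (hX : X.OrdConnected) (hY : Y.OrdConnected) :
    (cJoin X Y).OrdConnected := by
  constructor
  rintro p hp q hq z ⟨hz1, hz2⟩
  obtain ⟨a, ha, h1⟩ : ∃ a ∈ X ∪ Y, a ≤ z := by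
    rcases hp with (hp | hp) | ⟨x, hx, y, hy, (⟨h, h'⟩ | ⟨h, h'⟩)⟩
    exacts [⟨p, Or.inl hp, hz1⟩, ⟨p, Or.inr hp, hz1⟩,
      ⟨x, Or.inl hx, (h.trans_le hz1).le⟩, ⟨y, Or.inr hy, (h.trans_le hz1).le⟩]
  obtain ⟨b, hb, h2⟩ : ∃ b ∈ X ∪ Y, z ≤ b := by
    rcases hq with (hq | hq) | ⟨x, hx, y, hy, (⟨h, h'⟩ | ⟨h, h'⟩)⟩
    exacts [⟨q, Or.inl hq, hz2⟩, ⟨q, Or.inr hq, hz2⟩,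
      ⟨y, Or.inr hy, (hz2.trans_lt h').le⟩, ⟨x, Or.inl hx, (hz2.trans_lt h').le⟩]
  exact mem_cJoin_of_bounds hX hY ha hb h1 h2

end aux

/-- `Co(P)` satisfies the Bond identity (B). -/
theorem co_bond {P : Type*} [PartialOrder P]
    (X A₀ A₁ B₀ B₁ : Set P) (hX : X.OrdConnected) (hA0 : A₀.OrdConnected)
    (hA1 : A₁.OrdConnected) (hB0 : B₀.OrdConnected) (hB1 : B₁.OrdConnected) :
    X ∩ cJoin A₀ A₁ ∩ cJoin B₀ B₁ =
      cJoin
        (cJoin (cJoin (X ∩ A₀ ∩ cJoin B₀ B₁) (X ∩ B₀ ∩ cJoin A₀ A₁))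
               (cJoin (X ∩ A₁ ∩ cJoin B₀ B₁) (X ∩ B₁ ∩ cJoin A₀ A₁)))
        (cJoin (X ∩ cJoin A₀ A₁ ∩ cJoin B₀ B₁ ∩ cJoin A₀ B₀ ∩ cJoin A₁ B₁)
               (X ∩ cJoin A₀ A₁ ∩ cJoin B₀ B₁ ∩ cJoin A₀ B₁ ∩ cJoin A₁ B₀)) := by
  have hL : (X ∩ cJoin A₀ A₁ ∩ cJoin B₀ B₁).OrdConnected :=
    (hX.inter (cJoin_ordConnected hA0 hA1)).inter (cJoin_ordConnected hB0 hB1)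
  apply Set.Subset.antisymm
  · rintro z ⟨⟨hzX, hzA⟩, hzB⟩
    have hA' := hzA
    have hB' := hzB
    rcases hzA with (h | h) | ⟨a₀, ha₀, a₁, ha₁, hA⟩
    · exact subset_cJoin_left (subset_cJoin_left (subset_cJoin_left ⟨⟨hzX, h⟩, hB'⟩))
    · exact subset_cJoin_left (subset_cJoin_right (subset_cJoin_left ⟨⟨hzX, h⟩, hB'⟩))
    · rcases hzB with (h | h) | ⟨b₀, hb₀, b₁, hb₁, hB⟩
      · exact subset_cJoin_left (subset_cJoin_left (subset_cJoin_right ⟨⟨hzX, h⟩, hA'⟩))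
      · exact subset_cJoin_left (subset_cJoin_right (subset_cJoin_right ⟨⟨hzX, h⟩, hA'⟩))
      · rcases hA with ⟨h1, h2⟩ | ⟨h1, h2⟩ <;> rcases hB with ⟨h3, h4⟩ | ⟨h3, h4⟩
        · -- a₀ < z < a₁, b₀ < z < b₁ : z ∈ cJoin A₀ B₁ and z ∈ cJoin A₁ B₀
          exact subset_cJoin_right (subset_cJoin_right
            ⟨⟨⟨⟨hzX, hA'⟩, hB'⟩, Or.inr ⟨a₀, ha₀, b₁, hb₁, Or.inl ⟨h1, h4⟩⟩⟩,
              Or.inr ⟨a₁, ha₁, b₀, hb₀, Or.inr ⟨h3, h2⟩⟩⟩)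
        · -- a₀ < z < a₁, b₁ < z < b₀ : z ∈ cJoin A₀ B₀ and z ∈ cJoin A₁ B₁
          exact subset_cJoin_right (subset_cJoin_left
            ⟨⟨⟨⟨hzX, hA'⟩, hB'⟩, Or.inr ⟨a₀, ha₀, b₀, hb₀, Or.inl ⟨h1, h4⟩⟩⟩,
              Or.inr ⟨a₁, ha₁, b₁, hb₁, Or.inr ⟨h3, h2⟩⟩⟩)
        · -- a₁ < z < a₀, b₀ < z < b₁ : z ∈ cJoin A₀ B₀ and z ∈ cJoin A₁ B₁
          exact subset_cJoin_right (subset_cJoin_left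
            ⟨⟨⟨⟨hzX, hA'⟩, hB'⟩, Or.inr ⟨a₀, ha₀, b₀, hb₀, Or.inr ⟨h3, h2⟩⟩⟩,
              Or.inr ⟨a₁, ha₁, b₁, hb₁, Or.inl ⟨h1, h4⟩⟩⟩)
        · -- a₁ < z < a₀, b₁ < z < b₀ : z ∈ cJoin A₀ B₁ and z ∈ cJoin A₁ B₀
          exact subset_cJoin_right (subset_cJoin_right
            ⟨⟨⟨⟨hzX, hA'⟩, hB'⟩, Or.inr ⟨a₀, ha₀, b₁, hb₁, Or.inr ⟨h3, h2⟩⟩⟩,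
              Or.inr ⟨a₁, ha₁, b₀, hb₀, Or.inl ⟨h1, h4⟩⟩⟩)
  · have hG1 : X ∩ A₀ ∩ cJoin B₀ B₁ ⊆ X ∩ cJoin A₀ A₁ ∩ cJoin B₀ B₁ :=
      fun z h => ⟨⟨h.1.1, subset_cJoin_left h.1.2⟩, h.2⟩
    have hG2 : X ∩ B₀ ∩ cJoin A₀ A₁ ⊆ X ∩ cJoin A₀ A₁ ∩ cJoin B₀ B₁ :=
      fun z h => ⟨⟨h.1.1, h.2⟩, subset_cJoin_left h.1.2⟩
    have hG3 : X ∩ A₁ ∩ cJoin B₀ B₁ ⊆ X ∩ cJoin A₀ A₁ ∩ cJoin B₀ B₁ :=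
      fun z h => ⟨⟨h.1.1, subset_cJoin_right h.1.2⟩, h.2⟩
    have hG4 : X ∩ B₁ ∩ cJoin A₀ A₁ ⊆ X ∩ cJoin A₀ A₁ ∩ cJoin B₀ B₁ :=
      fun z h => ⟨⟨h.1.1, h.2⟩, subset_cJoin_right h.1.2⟩
    have hQ1 : X ∩ cJoin A₀ A₁ ∩ cJoin B₀ B₁ ∩ cJoin A₀ B₀ ∩ cJoin A₁ B₁ ⊆
        X ∩ cJoin A₀ A₁ ∩ cJoin B₀ B₁ := fun z h => h.1.1
    have hQ2 : X ∩ cJoin A₀ A₁ ∩ cJoin B₀ B₁ ∩ cJoin A₀ B₁ ∩ cJoin A₁ B₀ ⊆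
        X ∩ cJoin A₀ A₁ ∩ cJoin B₀ B₁ := fun z h => h.1.1
    exact cJoin_subset hL
      (cJoin_subset hL (cJoin_subset hL hG1 hG2) (cJoin_subset hL hG3 hG4))
      (cJoin_subset hL hQ1 hQ2)
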